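/- arXiv:2509.16379 — 3 statements merged into one kernel-verified Lean document; each statement's English description precedes it below -/
import Mathlib

section
/- Let ρ be a finite positive Borel measure on ℝ^d with finite absolute moments of all orders, and suppose that for every θ ∈ S^{d−1} the univariate Hamburger moment problem for the slice ρ_θ is determinate. Then ρ is uniquely determined by the family of sliced moments {m_k^θ : θ ∈ S^{d−1}, k ∈ ℕ}, where m_k^θ = ∫ ⟨x,θ⟩^k dρ(x). -/
open MeasureTheory
open scoped RealInnerProductSpace

/-! The sliced moments fix each projection `ρ_θ` by determinacy. The projections fix the
characteristic function of `ρ` along every ray, hence everywhere, and a finite measure is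
determined by its characteristic function (Cramér–Wold). -/

namespace MeasureTheory

def Measure.IsMomentDeterminate (μ : Measure ℝ) : Prop :=
  ∀ ν : Measure ℝ, IsFiniteMeasure ν → (∀ k : ℕ, Integrable (fun t => t ^ k) ν) →
    (∀ k : ℕ, ∫ t, t ^ k ∂ν = ∫ t, t ^ k ∂μ) → ν = μ

lemma Measure.IsMomentDeterminate.map_eq {X : Type*} [MeasurableSpace X] {μ ν : Measure X}
    [IsFiniteMeasure ν] {f : X → ℝ} (hf : Measurable f) (hdet : (μ.map f).IsMomentDeterminate)
    (hint : ∀ k : ℕ, Integrable (fun x => f x ^ k) ν)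
    (hmom : ∀ k : ℕ, ∫ x, f x ^ k ∂ν = ∫ x, f x ^ k ∂μ) : ν.map f = μ.map f := by
  refine hdet _ (Measure.isFiniteMeasure_map ν f) (fun k => ?_) (fun k => ?_)
  · exact (integrable_map_measure (by fun_prop) hf.aemeasurable).2 (hint k)
  · rw [integral_map hf.aemeasurable (by fun_prop), integral_map hf.aemeasurable (by fun_prop)]
    exact hmom k

end MeasureTheory

lemma exists_norm_eq_one_smul_eq {E : Type*} [NormedAddCommGroup E] [NormedSpace ℝ E]
    [Nontrivial E] (t : E) : ∃ θ : E, ‖θ‖ = 1 ∧ ‖t‖ • θ = t := by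
  rcases eq_or_ne t 0 with rfl | ht
  · obtain ⟨θ, hθ⟩ := exists_norm_eq E zero_le_one
    exact ⟨θ, hθ, by simp⟩
  · exact ⟨‖t‖⁻¹ • t, by simp [norm_smul, ht], by simp [smul_smul, ht]⟩

section InnerProductSpace

variable {E : Type*} [NormedAddCommGroup E] [InnerProductSpace ℝ E] [MeasurableSpace E]
  [OpensMeasurableSpace E]

lemma integrable_inner_pow {μ : Measure E} {k : ℕ}
    (hk : Integrable (fun x => ‖x‖ ^ k) μ) (θ : E) :
    Integrable (fun x => ⟪x, θ⟫ ^ k) μ := by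
  refine (hk.const_mul (‖θ‖ ^ k)).mono (by fun_prop) (ae_of_all _ fun x => ?_)
  rw [norm_pow, Real.norm_eq_abs, norm_mul, norm_pow, norm_pow, norm_norm, norm_norm, ← mul_pow]
  exact pow_le_pow_left₀ (abs_nonneg _) ((abs_real_inner_le_norm x θ).trans_eq (mul_comm _ _)) k

lemma charFun_smul_eq_charFun_map_inner (μ : Measure E) (θ : E) (r : ℝ) :
    charFun μ (r • θ) = charFun (μ.map (⟪·, θ⟫)) r := by
  rw [charFun_apply, charFun_apply_real, integral_map (by fun_prop) (by fun_prop)]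
  simp_rw [inner_smul_right, Complex.ofReal_mul]

theorem MeasureTheory.Measure.ext_of_map_inner [BorelSpace E] [SecondCountableTopology E]
    [CompleteSpace E] [Nontrivial E] {μ ν : Measure E} [IsFiniteMeasure μ] [IsFiniteMeasure ν]
    (h : ∀ θ : E, ‖θ‖ = 1 → μ.map (⟪·, θ⟫) = ν.map (⟪·, θ⟫)) : μ = ν := by
  refine Measure.ext_of_charFun (funext fun t => ?_)
  obtain ⟨θ, hθ, ht⟩ := exists_norm_eq_one_smul_eq t
  rw [← ht, charFun_smul_eq_charFun_map_inner, charFun_smul_eq_charFun_map_inner, h θ hθ]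

end InnerProductSpace

theorem sliced_moment_determinacy_general {d : ℕ} (hd : 0 < d)
    (ρ : Measure (EuclideanSpace ℝ (Fin d))) [IsFiniteMeasure ρ]
    (hdet : ∀ θ : EuclideanSpace ℝ (Fin d), ‖θ‖ = 1 →
      ∀ ν : Measure ℝ, IsFiniteMeasure ν → (∀ k : ℕ, Integrable (fun t => t ^ k) ν) →
        (∀ k : ℕ, ∫ t, t ^ k ∂ν =
          ∫ t, t ^ k ∂(ρ.map (fun x => inner ℝ x θ : EuclideanSpace ℝ (Fin d) → ℝ))) →
        ν = ρ.map (fun x => inner ℝ x θ : EuclideanSpace ℝ (Fin d) → ℝ)) :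
    ∀ η : Measure (EuclideanSpace ℝ (Fin d)), IsFiniteMeasure η →
      (∀ n : ℕ, Integrable (fun x => ‖x‖ ^ n) η) →
      (∀ θ : EuclideanSpace ℝ (Fin d), ‖θ‖ = 1 → ∀ k : ℕ,
        ∫ x, (inner ℝ x θ : ℝ) ^ k ∂η = ∫ x, (inner ℝ x θ : ℝ) ^ k ∂ρ) →
      η = ρ := by
  intro η _ hηmom hηeq
  have : NeZero d := ⟨hd.ne'⟩
  exact Measure.ext_of_map_inner fun θ hθ =>
    Measure.IsMomentDeterminate.map_eq (by fun_prop) (hdet θ hθ)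
      (fun k => integrable_inner_pow (hηmom k) θ) (hηeq θ hθ)

/-- Sliced moment determinacy: if `ρ` is a finite positive Borel measure on `ℝ^d`
(`d ≥ 1`) with finite absolute moments of all orders, and for every unit direction
`θ` the univariate Hamburger moment problem for the slice `ρ_θ` is determinate, then
`ρ` is uniquely determined among such measures by its sliced moments
`m_k^θ = ∫ ⟨x,θ⟫^k dρ`. -/
theorem sliced_moment_determinacy {d : ℕ} (hd : 0 < d)
    (ρ : Measure (EuclideanSpace ℝ (Fin d))) [IsFiniteMeasure ρ]
    (hmom : ∀ n : ℕ, Integrable (fun x => ‖x‖ ^ n) ρ)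
    (hdet : ∀ θ : EuclideanSpace ℝ (Fin d), ‖θ‖ = 1 →
      ∀ ν : Measure ℝ, IsFiniteMeasure ν → (∀ k : ℕ, Integrable (fun t => t ^ k) ν) →
        (∀ k : ℕ, ∫ t, t ^ k ∂ν =
          ∫ t, t ^ k ∂(ρ.map (fun x => inner ℝ x θ : EuclideanSpace ℝ (Fin d) → ℝ))) →
        ν = ρ.map (fun x => inner ℝ x θ : EuclideanSpace ℝ (Fin d) → ℝ)) :
    ∀ η : Measure (EuclideanSpace ℝ (Fin d)), IsFiniteMeasure η →
      (∀ n : ℕ, Integrable (fun x => ‖x‖ ^ n) η) →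
      (∀ θ : EuclideanSpace ℝ (Fin d), ‖θ‖ = 1 → ∀ k : ℕ,
        ∫ x, (inner ℝ x θ : ℝ) ^ k ∂η = ∫ x, (inner ℝ x θ : ℝ) ^ k ∂ρ) →
      η = ρ :=
  sliced_moment_determinacy_general hd ρ hdet
end

section
/- A probability measure on ℝ whose moment generating function is finite on an open interval around 0 is moment-determinate: any other probability measure on ℝ with the same moment sequence equals it. -/
/-!
Since `cosh (t x) = ∑ t ^ (2n) x ^ (2n) / (2n)!` has nonnegative terms, `∫ cosh (t x)` is a
series in the even moments; so a measure with the moments of `μ` also has a finite moment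
generating function on `(-δ, δ)`. The complex moment generating functions of the two measures are
then holomorphic on the strip `|Re z| < δ` with the same Taylor coefficients at `0` (the moments),
hence agree on the whole strip. On the imaginary axis they are the characteristic functions,
which determine the measures.
-/

open MeasureTheory ProbabilityTheory Filter Topology Complex
open scoped Nat

lemma lintegral_ofReal_cosh_mul (ρ : Measure ℝ) (h : ∀ n : ℕ, Integrable (fun x ↦ x ^ n) ρ)
    (t : ℝ) :
    ∫⁻ x, ENNReal.ofReal (Real.cosh (t * x)) ∂ρ
      = ∑' n, ENNReal.ofReal (t ^ (2 * n) / (2 * n)! * ∫ x, x ^ (2 * n) ∂ρ) := by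
  have hterm : ∀ n x, 0 ≤ t ^ (2 * n) / (2 * n)! * x ^ (2 * n) := fun n x ↦
    mul_nonneg (div_nonneg ((even_two_mul n).pow_nonneg t) (Nat.cast_nonneg _))
      ((even_two_mul n).pow_nonneg x)
  calc ∫⁻ x, ENNReal.ofReal (Real.cosh (t * x)) ∂ρ
      = ∫⁻ x, ∑' n, ENNReal.ofReal (t ^ (2 * n) / (2 * n)! * x ^ (2 * n)) ∂ρ := by
        refine lintegral_congr fun x ↦ ?_
        have hsum := Real.hasSum_cosh (t * x)
        simp_rw [mul_pow, mul_div_right_comm] at hsum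
        rw [hsum.tsum_eq.symm, ENNReal.ofReal_tsum_of_nonneg (hterm · x) hsum.summable]
    _ = ∑' n, ∫⁻ x, ENNReal.ofReal (t ^ (2 * n) / (2 * n)! * x ^ (2 * n)) ∂ρ :=
        lintegral_tsum fun n ↦ by fun_prop
    _ = _ := tsum_congr fun n ↦ by
        rw [← ofReal_integral_eq_lintegral_ofReal ((h (2 * n)).const_mul _)
          (ae_of_all _ (hterm n)), integral_const_mul]

lemma integrable_cosh_mul_of_moments_eq {μ ν : Measure ℝ}
    (hμ : ∀ n : ℕ, Integrable (fun x ↦ x ^ n) μ) (hν : ∀ n : ℕ, Integrable (fun x ↦ x ^ n) ν)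
    (hmom : ∀ n : ℕ, ∫ x, x ^ n ∂ν = ∫ x, x ^ n ∂μ) {t : ℝ}
    (h : Integrable (fun x ↦ Real.cosh (t * x)) μ) :
    Integrable (fun x ↦ Real.cosh (t * x)) ν := by
  have hpos : ∀ ρ : Measure ℝ, 0 ≤ᵐ[ρ] fun x ↦ Real.cosh (t * x) :=
    fun _ ↦ ae_of_all _ fun x ↦ (Real.cosh_pos _).le
  refine ⟨by fun_prop, ?_⟩
  rw [hasFiniteIntegral_iff_ofReal (hpos ν), lintegral_ofReal_cosh_mul ν hν]
  simp_rw [hmom]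
  rw [← lintegral_ofReal_cosh_mul μ hμ]
  exact (hasFiniteIntegral_iff_ofReal (hpos μ)).1 h.2

lemma integrable_exp_mul_of_moments_eq {μ ν : Measure ℝ}
    (hμ : ∀ n : ℕ, Integrable (fun x ↦ x ^ n) μ) (hν : ∀ n : ℕ, Integrable (fun x ↦ x ^ n) ν)
    (hmom : ∀ n : ℕ, ∫ x, x ^ n ∂ν = ∫ x, x ^ n ∂μ) {t : ℝ}
    (hpos : Integrable (fun x ↦ Real.exp (t * x)) μ)
    (hneg : Integrable (fun x ↦ Real.exp (-t * x)) μ) :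
    Integrable (fun x ↦ Real.exp (t * x)) ν := by
  have hcosh : Integrable (fun x ↦ Real.cosh (t * x)) μ := by
    simp_rw [Real.cosh_eq, ← neg_mul]
    exact (hpos.add hneg).div_const 2
  refine ((integrable_cosh_mul_of_moments_eq hμ hν hmom hcosh).const_mul 2).mono' (by fun_prop)
    (ae_of_all _ fun x ↦ ?_)
  rw [Real.norm_of_nonneg (Real.exp_pos _).le, Real.cosh_eq]
  linarith [Real.exp_pos (-(t * x))]

theorem AnalyticAt.eventuallyEq_of_iteratedDeriv_eq {𝕜 E : Type*} [NontriviallyNormedField 𝕜]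
    [CharZero 𝕜] [NormedAddCommGroup E] [NormedSpace 𝕜 E] [CompleteSpace E] {f g : 𝕜 → E}
    {z₀ : 𝕜} (hf : AnalyticAt 𝕜 f z₀) (hg : AnalyticAt 𝕜 g z₀)
    (h : ∀ n, iteratedDeriv n f z₀ = iteratedDeriv n g z₀) : f =ᶠ[𝓝 z₀] g := by
  have hfg : analyticOrderAt (f - g) z₀ = ⊤ := by
    refine eq_top_iff.2 <| ENat.forall_natCast_le_iff_le.1 fun n _ ↦
      (natCast_le_analyticOrderAt_iff_iteratedDeriv_eq_zero (hf.sub hg)).2 fun i _ ↦ ?_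
    rw [iteratedDeriv_sub hf.contDiffAt hg.contDiffAt, h, sub_self]
  filter_upwards [analyticOrderAt_eq_top.1 hfg] with z hz
  exact sub_eq_zero.1 hz

lemma Ioo_subset_interior_integrableExpSet {ρ : Measure ℝ} {δ : ℝ}
    (h : ∀ t, |t| < δ → Integrable (fun x ↦ Real.exp (t * x)) ρ) :
    Set.Ioo (-δ) δ ⊆ interior (integrableExpSet id ρ) :=
  interior_maximal (fun t ht ↦ h t (abs_lt.2 ht)) isOpen_Ioo

lemma iteratedDeriv_complexMGF_id_zero {ρ : Measure ℝ}
    (h : 0 ∈ interior (integrableExpSet id ρ)) (n : ℕ) :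
    iteratedDeriv n (complexMGF id ρ) 0 = ↑(∫ x, x ^ n ∂ρ) := by
  rw [iteratedDeriv_complexMGF (by simpa using h), ← integral_complex_ofReal]
  simp

theorem MeasureTheory.Measure.ext_of_moments_eq_of_integrable_exp_mul {μ ν : Measure ℝ}
    [IsFiniteMeasure μ] [IsFiniteMeasure ν] {δ : ℝ} (hδ : 0 < δ)
    (hμ : ∀ t, |t| < δ → Integrable (fun x ↦ Real.exp (t * x)) μ)
    (hν : ∀ t, |t| < δ → Integrable (fun x ↦ Real.exp (t * x)) ν)
    (hmom : ∀ n : ℕ, ∫ x, x ^ n ∂μ = ∫ x, x ^ n ∂ν) : μ = ν := by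
  set S : Set ℂ := re ⁻¹' Set.Ioo (-δ) δ
  have hμS : AnalyticOnNhd ℂ (complexMGF id μ) S :=
    analyticOnNhd_complexMGF.mono fun _ hz ↦ Ioo_subset_interior_integrableExpSet hμ hz
  have hνS : AnalyticOnNhd ℂ (complexMGF id ν) S :=
    analyticOnNhd_complexMGF.mono fun _ hz ↦ Ioo_subset_interior_integrableExpSet hν hz
  have h0 : (0 : ℝ) ∈ Set.Ioo (-δ) δ := ⟨neg_neg_of_pos hδ, hδ⟩
  have hnear : complexMGF id μ =ᶠ[𝓝 0] complexMGF id ν :=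
    (hμS 0 (by simpa [S])).eventuallyEq_of_iteratedDeriv_eq (hνS 0 (by simpa [S])) fun n ↦ by
      rw [iteratedDeriv_complexMGF_id_zero (Ioo_subset_interior_integrableExpSet hμ h0),
        iteratedDeriv_complexMGF_id_zero (Ioo_subset_interior_integrableExpSet hν h0), hmom]
  have hS : Set.EqOn (complexMGF id μ) (complexMGF id ν) S :=
    hμS.eqOn_of_preconnected_of_eventuallyEq hνS
      ((convex_Ioo (-δ) δ).linear_preimage reLm).isPreconnected (by simpa [S]) hnear
  refine Measure.ext_of_charFun (funext fun t ↦ ?_)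
  rw [← complexMGF_id_mul_I, ← complexMGF_id_mul_I]
  exact hS (by simpa [S])

/-- A probability measure on `ℝ` whose moment generating function is finite on an
open interval around `0` is moment-determinate: any probability measure with the
same moment sequence equals it. -/
theorem determinate_of_mgf_finite_near_zero (μ : Measure ℝ) [IsProbabilityMeasure μ]
    (hmgf : ∃ δ : ℝ, 0 < δ ∧ ∀ t : ℝ, |t| < δ →
      Integrable (fun x => Real.exp (t * x)) μ) :
    ∀ ν : Measure ℝ, IsProbabilityMeasure ν →
      (∀ k : ℕ, Integrable (fun x => x ^ k) ν) →
      (∀ k : ℕ, ∫ x, x ^ k ∂ν = ∫ x, x ^ k ∂μ) →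
      ν = μ := by
  obtain ⟨δ, hδ, hμ⟩ := hmgf
  intro ν _ hνk hmom
  have hμk : ∀ k : ℕ, Integrable (fun x => x ^ k) μ :=
    integrable_pow_of_mem_interior_integrableExpSet
      (Ioo_subset_interior_integrableExpSet hμ ⟨neg_neg_of_pos hδ, hδ⟩)
  have hν : ∀ t : ℝ, |t| < δ → Integrable (fun x => Real.exp (t * x)) ν := fun t ht ↦
    integrable_exp_mul_of_moments_eq hμk hνk hmom (hμ t ht) (hμ (-t) (by rwa [abs_neg]))
  exact Measure.ext_of_moments_eq_of_integrable_exp_mul hδ hν hμ hmom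
end

section
/- The zero set on the unit sphere S^{d−1} (d ≥ 2) of a polynomial p : ℝ^d → ℝ that does not vanish identically on S^{d−1} has zero surface (spherical) measure. -/
/-!
A nonzero polynomial has a Lebesgue-null zero set (induction on the number of variables with
Fubini: almost every slice is the root set of a nonzero one-variable polynomial). By the polar
decomposition `toSphere_apply'`, it therefore suffices to find a nonzero polynomial vanishing on
the cone `{r • θ}` over the zero set of `p` on the sphere. Splitting `p` on the sphere by the
parity of its homogeneous components and homogenising with powers of `|x|²` gives homogeneous
`E`, `O` of degrees `D`, `D + 1` with `E + O = p` on the sphere; then `E² |x|² - O²` vanishes on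
that cone. It is nonzero since `|x|²` is not a square of a polynomial when `d ≥ 2`, so
`E² |x|² = O²` would force `E = O = 0`, i.e. `p = 0` on the sphere.
-/

open MeasureTheory Metric MvPolynomial Finset

theorem MvPolynomial.volume_setOf_eval_eq_zero :
    ∀ {n : ℕ} {p : MvPolynomial (Fin n) ℝ}, p ≠ 0 → volume {x | eval x p = 0} = 0
  | 0, p, hp => by
    obtain ⟨a, rfl⟩ := C_surjective (Fin 0) p
    simp_all
  | n + 1, p, hp => by
    set q := finSuccEquiv ℝ n p
    have hq : q ≠ 0 := (map_ne_zero_iff _ (finSuccEquiv ℝ n).injective).2 hp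
    have hlead : ∀ᵐ y : Fin n → ℝ, eval y q.leadingCoeff ≠ 0 := by
      simpa [ae_iff] using volume_setOf_eval_eq_zero (Polynomial.leadingCoeff_ne_zero.2 hq)
    have hslice : ∀ᵐ y : Fin n → ℝ, volume {t : ℝ | eval (Fin.cons t y) p = 0} = 0 := by
      filter_upwards [hlead] with y hy
      have hqy : q.map (eval y) ≠ 0 := fun h => hy <| by
        simpa [Polynomial.coeff_map] using congr_arg (Polynomial.coeff · q.natDegree) h
      simpa [eval_eq_eval_mv_eval'] using (Polynomial.finite_setOfPred_isRoot hqy).measure_zero _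
    let e := MeasurableEquiv.piFinSuccAbove (fun _ : Fin (n + 1) => ℝ) 0
    have hZ : MeasurableSet {x : Fin (n + 1) → ℝ | eval x p = 0} :=
      (isClosed_eq (continuous_eval p) continuous_const).measurableSet
    rw [← (volume_preserving_piFinSuccAbove (fun _ => ℝ) 0).symm.map_eq, e.symm.map_apply,
      Measure.volume_eq_prod, Measure.prod_apply_symm (hZ.preimage e.symm.measurable)]
    refine lintegral_eq_zero_of_ae_eq_zero ?_
    filter_upwards [hslice] with y hy
    simpa [e, Fin.consEquiv] using hy

namespace MvPolynomial

variable {σ R : Type*}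

theorem IsHomogeneous.eval_smul [CommSemiring R] {φ : MvPolynomial σ R} {m : ℕ}
    (hφ : φ.IsHomogeneous m) (r : R) (x : σ → R) : eval (r • x) φ = r ^ m * eval x φ := by
  rw [eval_eq, eval_eq, Finset.mul_sum]
  refine Finset.sum_congr rfl fun e he => ?_
  have hdeg : ∑ i ∈ e.support, e i = m := by
    simpa [Finsupp.weight_apply, Finsupp.sum] using hφ (mem_support_iff.1 he)
  simp_rw [Pi.smul_apply, smul_eq_mul, mul_pow]
  rw [Finset.prod_mul_distrib, Finset.prod_pow_eq_pow_sum, hdeg]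
  ring

variable [Fintype σ]

variable (σ R) in
noncomputable def sumSq [CommSemiring R] : MvPolynomial σ R :=
  ∑ i, X i ^ 2

theorem isHomogeneous_sumSq [CommSemiring R] : (sumSq σ R).IsHomogeneous 2 :=
  IsHomogeneous.sum _ _ _ fun i _ => isHomogeneous_X_pow i 2

theorem not_isSquare_sumSq [CommRing R] [IsDomain R] [NeZero (2 : R)] {i j : σ} (hij : i ≠ j) :
    ¬IsSquare (sumSq σ R) := by
  classical
  rintro ⟨g, hg⟩
  -- restrict to the affine line `x_i = t, x_j = 1`, on which the sum of squares is `t ^ 2 + 1`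
  let line : σ → Polynomial R := fun k => if k = i then Polynomial.X else if k = j then 1 else 0
  have hline : aeval line (sumSq σ R) = Polynomial.X ^ 2 + 1 := by
    simp only [sumSq, map_sum, map_pow, aeval_X]
    rw [Finset.sum_eq_add i j hij (fun k _ hk => by simp [line, hk.1, hk.2]) (by simp) (by simp)]
    simp [line, hij.symm]
  set h := aeval line g
  have hmul : (h - Polynomial.X) * (h + Polynomial.X) = 1 := by
    have := congr_arg (aeval line) hg
    rw [hline, map_mul] at this
    linear_combination -this
  have hconst : ∀ u : Polynomial R, IsUnit u → u.coeff 1 = 0 := fun u hu =>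
    Polynomial.coeff_eq_zero_of_natDegree_lt <| by
      rw [Polynomial.natDegree_eq_zero_of_isUnit hu]; exact zero_lt_one
  have h1 := hconst _ (IsUnit.of_mul_eq_one _ hmul)
  have h2 := hconst _ (IsUnit.of_mul_eq_one _ ((mul_comm _ _).trans hmul))
  simp only [Polynomial.coeff_sub, Polynomial.coeff_add, Polynomial.coeff_X_one] at h1 h2
  exact two_ne_zero (by linear_combination h2 - h1 : (2 : R) = 0)

theorem eq_zero_of_sq_mul_sumSq_eq_sq [CommRing R] [IsDomain R]
    [UniqueFactorizationMonoid R] [NeZero (2 : R)] {i j : σ} (hij : i ≠ j)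
    {A B : MvPolynomial σ R} (h : A ^ 2 * sumSq σ R = B ^ 2) : A = 0 := by
  by_contra hA
  obtain ⟨C, rfl⟩ : A ∣ B :=
    (IsIntegrallyClosed.pow_dvd_pow_iff two_ne_zero).1 ⟨_, h.symm⟩
  refine not_isSquare_sumSq hij ⟨C, mul_left_cancel₀ (pow_ne_zero 2 hA) ?_⟩
  linear_combination h

section Homogenize

variable [CommSemiring R]

-- The homogeneous polynomial of degree `m` that agrees on the unit sphere with the sum of the
-- homogeneous components of `p` whose degree has the parity of `m`.
noncomputable def sphereHomogenize (m : ℕ) (p : MvPolynomial σ R) : MvPolynomial σ R :=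
  ∑ k ∈ range (p.totalDegree + 1) with Even (m - k),
    homogeneousComponent k p * sumSq σ R ^ ((m - k) / 2)

theorem isHomogeneous_sphereHomogenize {m : ℕ} {p : MvPolynomial σ R}
    (hm : p.totalDegree ≤ m) :
    (sphereHomogenize m p).IsHomogeneous m := by
  refine IsHomogeneous.sum _ _ _ fun k hk => ?_
  obtain ⟨hk, hev⟩ := Finset.mem_filter.1 hk
  have hdeg : k + 2 * ((m - k) / 2) = m := by
    have := Nat.two_mul_div_two_of_even hev
    rw [Finset.mem_range] at hk
    omega
  simpa only [hdeg] using
    (homogeneousComponent_isHomogeneous k p).mul (isHomogeneous_sumSq.pow ((m - k) / 2))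

theorem eval_sphereHomogenize_add_eval_sphereHomogenize_succ {m : ℕ} {p : MvPolynomial σ R}
    (hm : p.totalDegree ≤ m) {x : σ → R} (hx : eval x (sumSq σ R) = 1) :
    eval x (sphereHomogenize m p) + eval x (sphereHomogenize (m + 1) p) = eval x p := by
  have hparity : ∀ k ∈ range (p.totalDegree + 1), Even (m + 1 - k) ↔ ¬Even (m - k) := by
    intro k hk
    rw [Finset.mem_range] at hk
    rw [show m + 1 - k = m - k + 1 by omega, Nat.even_add_one]
  simp only [sphereHomogenize, map_sum, map_mul, map_pow, hx, one_pow, mul_one]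
  rw [Finset.filter_congr hparity, Finset.sum_filter_add_sum_filter_not, ← map_sum,
    sum_homogeneousComponent]

end Homogenize

section ConeEquation

variable [CommRing R]

noncomputable def coneEquation (p : MvPolynomial σ R) : MvPolynomial σ R :=
  sphereHomogenize p.totalDegree p ^ 2 * sumSq σ R - sphereHomogenize (p.totalDegree + 1) p ^ 2

theorem eval_smul_coneEquation {p : MvPolynomial σ R} {x : σ → R}
    (hx : eval x (sumSq σ R) = 1) (hpx : eval x p = 0) (r : R) :
    eval (r • x) (coneEquation p) = 0 := by
  have hsplit : eval x (sphereHomogenize p.totalDegree p) =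
      -eval x (sphereHomogenize (p.totalDegree + 1) p) :=
    eq_neg_of_add_eq_zero_left <|
      (eval_sphereHomogenize_add_eval_sphereHomogenize_succ le_rfl hx).trans hpx
  rw [coneEquation, map_sub, map_mul, map_pow, map_pow,
    (isHomogeneous_sphereHomogenize le_rfl).eval_smul,
    (isHomogeneous_sphereHomogenize (Nat.le_add_right _ 1)).eval_smul,
    isHomogeneous_sumSq.eval_smul, hx, hsplit]
  ring

theorem coneEquation_ne_zero [IsDomain R] [UniqueFactorizationMonoid R] [NeZero (2 : R)]
    {i j : σ} (hij : i ≠ j) {p : MvPolynomial σ R} {x : σ → R}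
    (hx : eval x (sumSq σ R) = 1) (hpx : eval x p ≠ 0) : coneEquation p ≠ 0 := by
  intro h
  have hE := eq_zero_of_sq_mul_sumSq_eq_sq hij (sub_eq_zero.1 h)
  have hO : sphereHomogenize (p.totalDegree + 1) p = 0 := by
    simpa [hE, coneEquation] using h
  apply hpx
  rw [← eval_sphereHomogenize_add_eval_sphereHomogenize_succ le_rfl hx, hE, hO, map_zero,
    add_zero]

end ConeEquation

end MvPolynomial

theorem EuclideanSpace.volume_setOf_eval_eq_zero {n : ℕ} {p : MvPolynomial (Fin n) ℝ}
    (hp : p ≠ 0) : volume {x : EuclideanSpace ℝ (Fin n) | eval (fun i => x i) p = 0} = 0 :=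
  ((EuclideanSpace.volume_preserving_symm_measurableEquiv_toLp (Fin n)).measure_preimage_equiv
    _).trans (MvPolynomial.volume_setOf_eval_eq_zero hp)

theorem EuclideanSpace.eval_sumSq_of_mem_sphere {n : ℕ} {x : EuclideanSpace ℝ (Fin n)}
    (hx : x ∈ sphere 0 1) : eval (fun i => x i) (sumSq (Fin n) ℝ) = 1 := by
  simp only [sumSq, map_sum, map_pow, eval_X]
  rw [← EuclideanSpace.real_norm_sq_eq, mem_sphere_zero_iff_norm.1 hx, one_pow]

/-- The zero set, on the unit sphere `S^{d-1}` (`d ≥ 2`) with its surface measure,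
of a real polynomial in `d` variables not vanishing identically on the sphere, has
surface measure zero. -/
theorem polynomial_zero_set_sphere_measure_zero {d : ℕ} (hd : 2 ≤ d)
    (p : MvPolynomial (Fin d) ℝ)
    (hp : ∃ θ : sphere (0 : EuclideanSpace ℝ (Fin d)) 1,
      MvPolynomial.eval (fun i => (θ : EuclideanSpace ℝ (Fin d)) i) p ≠ 0) :
    (volume : Measure (EuclideanSpace ℝ (Fin d))).toSphere
      {θ : sphere (0 : EuclideanSpace ℝ (Fin d)) 1 |
        MvPolynomial.eval (fun i => (θ : EuclideanSpace ℝ (Fin d)) i) p = 0} = 0 := by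
  set Z := {θ : sphere (0 : EuclideanSpace ℝ (Fin d)) 1 |
    MvPolynomial.eval (fun i => (θ : EuclideanSpace ℝ (Fin d)) i) p = 0}
  have hZ : MeasurableSet Z :=
    (isClosed_eq ((continuous_eval p).comp (by fun_prop)) continuous_const).measurableSet
  obtain ⟨θ₀, hθ₀⟩ := hp
  have hQ : coneEquation p ≠ 0 :=
    coneEquation_ne_zero (i := ⟨0, by omega⟩) (j := ⟨1, by omega⟩)
      (Fin.ne_of_val_ne zero_ne_one) (EuclideanSpace.eval_sumSq_of_mem_sphere θ₀.2) hθ₀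
  rw [Measure.toSphere_apply' _ hZ]
  refine mul_eq_zero_of_right _
    (measure_mono_null ?_ (EuclideanSpace.volume_setOf_eval_eq_zero hQ))
  rintro _ ⟨r, -, _, ⟨θ, hθ, rfl⟩, rfl⟩
  exact eval_smul_coneEquation (EuclideanSpace.eval_sumSq_of_mem_sphere θ.2) hθ r
end
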